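/- (Theorem 3) Let d ≥ 1 and suppose the tensor Θ: ℤ^d × ℤ^d × ℤ^d → ℂ satisfies sup_{j,k,ℓ∈ℤ^d} |Θ(j,k,ℓ)| ⟨|j−k|+|j−ℓ|⟩^{2N} < ∞ for some N > d, and let b ∈ c₀(ℤ^d). Then the bilinear commutators [𝒯_Θ, b]_i, i = 1, 2, are compact bilinear operators from ℓ^p(ℤ^d) × ℓ^q(ℤ^d) to ℓ^r(ℤ^d) for any 1 ≤ p, q ≤ ∞ and 1 ≤ r < ∞ with 1/p + 1/q = 1/r; that is, the set {[𝒯_Θ, b]_i(f,g) : ‖f‖_{ℓ^p} ≤ 1, ‖g‖_{ℓ^q} ≤ 1} is totally bounded in ℓ^r(ℤ^d). -/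

import Mathlib

open scoped ENNReal NNReal BigOperators

noncomputable section

/-- The integer lattice `ℤ^d`. -/
abbrev Zd (d : ℕ) := Fin d → ℤ

/-- Euclidean norm `|j|` of an integer vector `j ∈ ℤ^d`. -/
def znorm {d : ℕ} (j : Zd d) : ℝ := Real.sqrt (∑ i, ((j i : ℝ)) ^ 2)

/-- Euclidean norm of a real vector. -/
def rnorm {d : ℕ} (x : Fin d → ℝ) : ℝ := Real.sqrt (∑ i, (x i) ^ 2)

/-- Japanese bracket `⟨x⟩ = (1 + x²)^{1/2}`. -/
def jb (x : ℝ) : ℝ := Real.sqrt (1 + x ^ 2)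

/-- The discrete bilinear operator `𝒯_Θ` (named `Tbil` here) associated with an infinite tensor `Θ`:
`(𝒯_Θ(f,g))_j = Σ_k Σ_ℓ Θ(j,k,ℓ) f_k g_ℓ`. -/
def Tbil {d : ℕ} (Θ : Zd d → Zd d → Zd d → ℂ) (f g : Zd d → ℂ) : Zd d → ℂ :=
  fun j => ∑' k, ∑' l, Θ j k l * f k * g l

/-- `ℓ^p`-type norm (extended-real valued) of a family of nonnegative extended reals,
with the usual modification (supremum) when `p = ∞`. -/
def nestNorm {ι : Type*} (p : ℝ≥0∞) (F : ι → ℝ≥0∞) : ℝ≥0∞ :=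
  if p = ∞ then ⨆ i, F i else (∑' i, F i ^ p.toReal) ^ (1 / p.toReal)

/-- The weighted `ℓ^p_s(ℤ^d)` norm `(Σ_k ⟨k⟩^{sp} |f_k|^p)^{1/p}`. -/
def wlpNorm {d : ℕ} (p : ℝ≥0∞) (s : ℝ) (f : Zd d → ℂ) : ℝ≥0∞ :=
  nestNorm p fun k => ENNReal.ofReal (jb (znorm k) ^ s * ‖f k‖)

/-- The `ℓ^p(ℤ^d)` norm. -/
def lpNorm {d : ℕ} (p : ℝ≥0∞) (f : Zd d → ℂ) : ℝ≥0∞ :=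
  nestNorm p fun k => ENNReal.ofReal ‖f k‖

/-- The tensor norm `‖Θ‖_{ω,N} = sup_{j,k,ℓ} |Θ(j,k,ℓ)| ⟨|j−k|+|j−ℓ|⟩^{2N} /
(⟨|j|+|k|⟩^ω ⟨|j|+|ℓ|⟩^ω)`. -/
def tensorNorm {d : ℕ} (ω N : ℝ) (Θ : Zd d → Zd d → Zd d → ℂ) : ℝ≥0∞ :=
  ⨆ j, ⨆ k, ⨆ l, ENNReal.ofReal
    (‖Θ j k l‖ * jb (znorm (j - k) + znorm (j - l)) ^ (2 * N) /
      (jb (znorm j + znorm k) ^ ω * jb (znorm j + znorm l) ^ ω))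

/-- The tensor norm `‖Θ‖_{ω₁,ω₂,N}`. -/
def tensorNorm2 {d : ℕ} (ω₁ ω₂ N : ℝ) (Θ : Zd d → Zd d → Zd d → ℂ) : ℝ≥0∞ :=
  ⨆ j, ⨆ k, ⨆ l, ENNReal.ofReal
    (‖Θ j k l‖ * jb (znorm (j - k) + znorm (j - l)) ^ (2 * N) /
      (jb (znorm j + znorm k) ^ ω₁ * jb (znorm j + znorm l) ^ ω₂))

/-- The tensor norm `‖Θ‖_{0,0,ω,N} = sup_{j,k,ℓ} |Θ(j,k,ℓ)| ⟨|j−k|+|j−ℓ|⟩^{2N} /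
⟨|j|+|k|+|ℓ|⟩^ω`. -/
def tensorNorm00 {d : ℕ} (ω N : ℝ) (Θ : Zd d → Zd d → Zd d → ℂ) : ℝ≥0∞ :=
  ⨆ j, ⨆ k, ⨆ l, ENNReal.ofReal
    (‖Θ j k l‖ * jb (znorm (j - k) + znorm (j - l)) ^ (2 * N) /
      jb (znorm j + znorm k + znorm l) ^ ω)

/-- The first bilinear commutator `[𝒯_Θ, b]₁(f,g) = 𝒯_Θ(bf, g) − b·𝒯_Θ(f,g)`. -/
def comm1 {d : ℕ} (Θ : Zd d → Zd d → Zd d → ℂ) (b f g : Zd d → ℂ) : Zd d → ℂ :=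
  fun j => Tbil Θ (fun k => b k * f k) g j - b j * Tbil Θ f g j

/-- The second bilinear commutator `[𝒯_Θ, b]₂(f,g) = 𝒯_Θ(f, bg) − b·𝒯_Θ(f,g)`. -/
def comm2 {d : ℕ} (Θ : Zd d → Zd d → Zd d → ℂ) (b f g : Zd d → ℂ) : Zd d → ℂ :=
  fun j => Tbil Θ f (fun l => b l * g l) j - b j * Tbil Θ f g j

/-- One-step finite difference in the variables `(j,k)`, with shift `v ∈ ℤ^d`:
`(D2 v Θ)(j,k,ℓ) = Θ(j+v, k+v, ℓ) − Θ(j,k,ℓ)`. -/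
def D2 {d : ℕ} (v : Zd d) (Θ : Zd d → Zd d → Zd d → ℂ) : Zd d → Zd d → Zd d → ℂ :=
  fun j k l => Θ (j + v) (k + v) l - Θ j k l

/-- One-step finite difference in the variables `(j,ℓ)`, with shift `v ∈ ℤ^d`:
`(D3 v Θ)(j,k,ℓ) = Θ(j+v, k, ℓ+v) − Θ(j,k,ℓ)`. -/
def D3 {d : ℕ} (v : Zd d) (Θ : Zd d → Zd d → Zd d → ℂ) : Zd d → Zd d → Zd d → ℂ :=
  fun j k l => Θ (j + v) k (l + v) - Θ j k l

/-- The iterated partial finite difference operator `Δ₂^α` for `α ∈ ℤ^d`: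
in direction `m`, `Δ_{2,m}^t = (Δ₂^{m, sign t})^{|t|}`. -/
def Delta2 {d : ℕ} (α : Zd d) (Θ : Zd d → Zd d → Zd d → ℂ) : Zd d → Zd d → Zd d → ℂ :=
  (List.finRange d).foldr
    (fun m F => (D2 (Pi.single m (Int.sign (α m))))^[(α m).natAbs] ∘ F) id Θ

/-- The iterated partial finite difference operator `Δ₃^β` for `β ∈ ℤ^d`. -/
def Delta3 {d : ℕ} (β : Zd d) (Θ : Zd d → Zd d → Zd d → ℂ) : Zd d → Zd d → Zd d → ℂ :=
  (List.finRange d).foldr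
    (fun m F => (D3 (Pi.single m (Int.sign (β m))))^[(β m).natAbs] ∘ F) id Θ

/-- `|α| = Σ_m |α_m|` for `α ∈ ℤ^d`. -/
def l1norm {d : ℕ} (α : Zd d) : ℝ := ∑ m, |(α m : ℝ)|

/-- The bilinear tensor class `BT^{ω,N}(ℤ^d)`:
`|Δ₂^α Δ₃^β Θ(j,k,ℓ)| ≤ C_{N,α,β} ⟨|j|+|k|+|ℓ|⟩^{ω−|α|−|β|} ⟨|j−k|+|j−ℓ|⟩^{−2N}`. -/
def BT {d : ℕ} (ω : ℝ) (N : ℕ) (Θ : Zd d → Zd d → Zd d → ℂ) : Prop :=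
  ∀ α β : Zd d, ∃ C : ℝ, 0 < C ∧ ∀ j k l : Zd d,
    ‖Delta2 α (Delta3 β Θ) j k l‖ ≤
      C * jb (znorm j + znorm k + znorm l) ^ (ω - l1norm α - l1norm β) *
        jb (znorm (j - k) + znorm (j - l)) ^ (-(2 * (N : ℝ)))

/-- The bilinear tensor class of order zero, `BT^0(ℤ^d) = ∪_{N > d} BT^{0,N}(ℤ^d)`. -/
def BT0 {d : ℕ} (Θ : Zd d → Zd d → Zd d → ℂ) : Prop :=
  ∃ N : ℕ, d < N ∧ BT 0 N Θ

/-- Directional derivative of a function on `ℝ^d × ℝ^d` in the direction `v`. -/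
def pDeriv {d : ℕ} (v : (Fin d → ℝ) × (Fin d → ℝ))
    (F : (Fin d → ℝ) × (Fin d → ℝ) → ℂ) : (Fin d → ℝ) × (Fin d → ℝ) → ℂ :=
  fun p => fderiv ℝ F p v

/-- Iterated partial derivative `∂_x^α` in the first group of variables. -/
def pdx {d : ℕ} (α : Fin d → ℕ) :
    ((Fin d → ℝ) × (Fin d → ℝ) → ℂ) → (Fin d → ℝ) × (Fin d → ℝ) → ℂ :=
  (List.finRange d).foldr (fun m G => (pDeriv (Pi.single m 1, 0))^[α m] ∘ G) id

/-- Iterated partial derivative `∂_y^β` in the second group of variables. -/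
def pdy {d : ℕ} (β : Fin d → ℕ) :
    ((Fin d → ℝ) × (Fin d → ℝ) → ℂ) → (Fin d → ℝ) × (Fin d → ℝ) → ℂ :=
  (List.finRange d).foldr (fun m G => (pDeriv (0, Pi.single m 1))^[β m] ∘ G) id


/-!
The hypothesis on `Θ` gives `|Θ(j,k,ℓ)| ≤ A ⟨j-k⟩^{-N} ⟨j-ℓ⟩^{-N}`, so each commutator is
dominated pointwise by a product of two discrete convolutions with the summable kernel
`⟨m⟩^{-N'}`, `d < N' < N`, one of which carries the weight `|b_k| + |b_j|`. Young's and Hölder's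
inequalities bound such products in `ℓ^r` uniformly on the unit balls of `ℓ^p × ℓ^q`. Because
`b → 0` and the kernel has the spare decay `⟨m⟩^{N'-N}`, that weight is uniformly small once `|j|`
is large, so the images have uniformly small `ℓ^r`-tails; bounded sets of `ℓ^r` with uniformly
small tails are totally bounded.
-/

open Filter Topology

section Bracket

variable {d : ℕ}

lemma jb_pos (x : ℝ) : 0 < jb x := Real.sqrt_pos.2 (by positivity)

lemma jb_rpow_nonneg (x s : ℝ) : 0 ≤ jb x ^ s := Real.rpow_nonneg (jb_pos x).le s

lemma one_le_jb (x : ℝ) : 1 ≤ jb x := Real.one_le_sqrt.2 (by nlinarith [sq_nonneg x])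

lemma abs_le_jb (x : ℝ) : |x| ≤ jb x := by
  rw [← Real.sqrt_sq_eq_abs]
  exact Real.sqrt_le_sqrt (by linarith)

lemma jb_le_jb {x y : ℝ} (h : |x| ≤ y) : jb x ≤ jb y :=
  Real.sqrt_le_sqrt (by nlinarith [sq_abs x, abs_nonneg x])

lemma jb_rpow_neg_add_le {a b N : ℝ} (ha : 0 ≤ a) (hb : 0 ≤ b) (hN : 0 ≤ N) :
    jb (a + b) ^ (-(2 * N)) ≤ jb a ^ (-N) * jb b ^ (-N) := by
  have hmono {x : ℝ} (hx : 0 ≤ x) (hxy : x ≤ a + b) : jb (a + b) ^ (-N) ≤ jb x ^ (-N) :=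
    Real.rpow_le_rpow_of_nonpos (jb_pos x) (jb_le_jb (by rwa [abs_of_nonneg hx])) (by linarith)
  rw [show -(2 * N) = -N + -N by ring, Real.rpow_add (jb_pos _)]
  exact mul_le_mul (hmono ha (by linarith)) (hmono hb (by linarith))
    (jb_rpow_nonneg _ _) (jb_rpow_nonneg _ _)

lemma znorm_nonneg (j : Zd d) : 0 ≤ znorm j := Real.sqrt_nonneg _

lemma abs_le_znorm (j : Zd d) (i : Fin d) : |(j i : ℝ)| ≤ znorm j := by
  rw [← Real.sqrt_sq_eq_abs]
  exact Real.sqrt_le_sqrt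
    (Finset.single_le_sum (f := fun i => ((j i : ℝ)) ^ 2) (fun _ _ => sq_nonneg _)
      (Finset.mem_univ i))

lemma finite_setOf_znorm_le (M : ℝ) : {k : Zd d | znorm k ≤ M}.Finite := by
  refine (Set.finite_Icc (fun _ => -⌈M⌉) fun _ => ⌈M⌉).subset fun k hk => ?_
  have hbound (i : Fin d) : |(k i : ℝ)| ≤ ⌈M⌉ := (abs_le_znorm k i).trans (hk.trans (Int.le_ceil M))
  exact ⟨fun i => by exact_mod_cast (abs_le.mp (hbound i)).1,
    fun i => by exact_mod_cast (abs_le.mp (hbound i)).2⟩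

lemma tendsto_znorm_cofinite : Tendsto (znorm (d := d)) cofinite atTop :=
  tendsto_atTop.2 fun M => eventually_cofinite.2 <|
    (finite_setOf_znorm_le M).subset fun _ hk => (not_le.1 hk).le

lemma tendsto_cofinite_zero_of_forall_znorm {E : Type*} [SeminormedAddGroup E] {b : Zd d → E}
    (hb : ∀ ε : ℝ, 0 < ε → ∃ R : ℝ, ∀ k : Zd d, R < znorm k → ‖b k‖ < ε) :
    Tendsto b cofinite (𝓝 0) :=
  Metric.tendsto_nhds.2 fun ε hε =>
    let ⟨R, hR⟩ := hb ε hε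
    (tendsto_znorm_cofinite.eventually_gt_atTop R).mono fun k hk => by simpa using hR k hk

end Bracket

section Kernel

variable {d : ℕ}

def decayKernel (d : ℕ) (s : ℝ) (m : Zd d) : ℝ≥0∞ := ENNReal.ofReal (jb (znorm m) ^ (-s))

lemma decayKernel_anti {s s' : ℝ} (h : s ≤ s') (m : Zd d) :
    decayKernel d s' m ≤ decayKernel d s m :=
  ENNReal.ofReal_le_ofReal (Real.rpow_le_rpow_of_exponent_le (one_le_jb _) (by linarith))

lemma decayKernel_le_one {s : ℝ} (hs : 0 ≤ s) (m : Zd d) : decayKernel d s m ≤ 1 := by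
  simpa [decayKernel] using decayKernel_anti hs m

lemma decayKernel_add (s t : ℝ) (m : Zd d) :
    decayKernel d (s + t) m = decayKernel d s m * decayKernel d t m := by
  rw [decayKernel, decayKernel, decayKernel, ← ENNReal.ofReal_mul (jb_rpow_nonneg _ _),
    ← Real.rpow_add (jb_pos _), neg_add]

lemma tendsto_decayKernel_cofinite {s : ℝ} (hs : 0 < s) :
    Tendsto (decayKernel d s) cofinite (𝓝 0) := by
  have hjb : Tendsto (fun m : Zd d => jb (znorm m)) cofinite atTop :=
    tendsto_atTop_mono (fun m => (le_abs_self _).trans (abs_le_jb _)) tendsto_znorm_cofinite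
  have := ENNReal.tendsto_ofReal ((tendsto_rpow_neg_atTop hs).comp hjb)
  rwa [ENNReal.ofReal_zero] at this

lemma enorm_le_mul_decayKernel {E : Type*} [SeminormedAddGroup E] {N N₁ N₂ : ℝ} (hN : 0 ≤ N)
    (hN₁ : N₁ ≤ N) (hN₂ : N₂ ≤ N) {z : E} {m m' : Zd d} {A : ℝ≥0∞}
    (hA : ENNReal.ofReal (‖z‖ * jb (znorm m + znorm m') ^ (2 * N)) ≤ A) :
    ‖z‖ₑ ≤ A * decayKernel d N₁ m * decayKernel d N₂ m' := by
  have hw : jb (znorm m + znorm m') ^ (2 * N) * jb (znorm m + znorm m') ^ (-(2 * N)) = 1 := by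
    rw [← Real.rpow_add (jb_pos _), add_neg_cancel, Real.rpow_zero]
  calc ‖z‖ₑ = ENNReal.ofReal (‖z‖ * jb (znorm m + znorm m') ^ (2 * N)) *
        ENNReal.ofReal (jb (znorm m + znorm m') ^ (-(2 * N))) := by
        rw [← ENNReal.ofReal_mul (mul_nonneg (norm_nonneg _) (jb_rpow_nonneg _ _)),
          mul_assoc, hw, mul_one, ofReal_norm]
    _ ≤ A * ENNReal.ofReal (jb (znorm m) ^ (-N) * jb (znorm m') ^ (-N)) := by
        gcongr
        exact jb_rpow_neg_add_le (znorm_nonneg _) (znorm_nonneg _) hN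
    _ = A * decayKernel d N m * decayKernel d N m' := by
        rw [ENNReal.ofReal_mul (jb_rpow_nonneg _ _), ← mul_assoc]
        rfl
    _ ≤ A * decayKernel d N₁ m * decayKernel d N₂ m' := by
        gcongr
        · exact decayKernel_anti hN₁ m
        · exact decayKernel_anti hN₂ m'

lemma tsum_pi_prod {α : Type*} (a : α → ℝ≥0∞) (n : ℕ) :
    ∑' m : Fin n → α, ∏ i, a (m i) = (∑' t, a t) ^ n := by
  induction n with
  | zero => simp
  | succ n ih =>
    rw [← (Fin.consEquiv fun _ => α).tsum_eq]
    simp only [Fin.consEquiv, Equiv.coe_fn_mk, Fin.prod_univ_succ, Fin.cons_zero, Fin.cons_succ]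
    rw [ENNReal.tsum_prod (f := fun t (m : Fin n → α) => a t * ∏ i, a (m i))]
    simp_rw [ENNReal.tsum_mul_left, ih, ENNReal.tsum_mul_right, pow_succ']

lemma jb_rpow_neg_le_prod {u : ℝ} (hu : 0 ≤ u) (m : Zd d) :
    jb (znorm m) ^ (-(d * u)) ≤ ∏ i, jb (m i) ^ (-u) := by
  have hprod : ∏ i, jb (m i) ≤ jb (znorm m) ^ d := by
    simpa using Finset.prod_le_prod (fun i _ => (jb_pos _).le)
      fun i (_ : i ∈ Finset.univ) => jb_le_jb (abs_le_znorm m i)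
  rw [Real.finsetProd_rpow _ _ fun i _ => (jb_pos _).le, ← mul_neg,
    Real.rpow_natCast_mul (jb_pos _).le]
  exact Real.rpow_le_rpow_of_nonpos (Finset.prod_pos fun i _ => jb_pos _) hprod (by linarith)

lemma tsum_ofReal_jb_rpow_neg_ne_top {u : ℝ} (hu : 1 < u) :
    ∑' t : ℤ, ENNReal.ofReal (jb t ^ (-u)) ≠ ∞ := by
  have hsum : Summable fun t : ℤ => jb t ^ (-u) := by
    refine (Real.summable_abs_int_rpow hu).of_norm_bounded_eventually ?_
    filter_upwards [eventually_cofinite_ne 0] with t ht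
    rw [Real.norm_of_nonneg (jb_rpow_nonneg _ _)]
    exact Real.rpow_le_rpow_of_nonpos (abs_pos.2 (Int.cast_ne_zero.2 ht)) (abs_le_jb _)
      (by linarith)
  rw [← ENNReal.ofReal_tsum_of_nonneg (fun _ => jb_rpow_nonneg _ _) hsum]
  exact ENNReal.ofReal_ne_top

lemma tsum_decayKernel_le_pow {s u : ℝ} (hu : 0 ≤ u) (hs : d * u ≤ s) :
    ∑' m : Zd d, decayKernel d s m ≤ (∑' t : ℤ, ENNReal.ofReal (jb t ^ (-u))) ^ d := by
  rw [← tsum_pi_prod]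
  refine ENNReal.tsum_le_tsum fun m => ?_
  rw [← ENNReal.ofReal_prod_of_nonneg fun _ _ => jb_rpow_nonneg _ _]
  exact (decayKernel_anti hs m).trans (ENNReal.ofReal_le_ofReal (jb_rpow_neg_le_prod hu m))

lemma tsum_decayKernel_ne_top {s : ℝ} (hs : (d : ℝ) < s) :
    ∑' m : Zd d, decayKernel d s m ≠ ∞ := by
  rcases Nat.eq_zero_or_pos d with rfl | hd
  · exact ne_top_of_le_ne_top (by simp) (tsum_decayKernel_le_pow le_rfl (by simpa using hs.le))
  · have hd' : (0 : ℝ) < d := by exact_mod_cast hd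
    refine ne_top_of_le_ne_top (ENNReal.pow_ne_top (tsum_ofReal_jb_rpow_neg_ne_top (u := s / d) ?_))
      (tsum_decayKernel_le_pow (div_nonneg (by linarith) hd'.le)
        (by rw [mul_div_cancel₀ _ hd'.ne']))
    rwa [one_lt_div hd']

end Kernel

namespace ENNReal

lemma inner_le_weight_mul_Lp_tsum {ι : Type*} {P : ℝ} (hP : 1 ≤ P) (w f : ι → ℝ≥0∞) :
    ∑' i, w i * f i ≤ (∑' i, w i) ^ (1 - P⁻¹) * (∑' i, w i * f i ^ P) ^ P⁻¹ := by
  rw [ENNReal.tsum_eq_iSup_sum]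
  refine iSup_le fun s => (inner_le_weight_mul_Lp_of_nonneg s hP w f).trans ?_
  gcongr
  · exact sub_nonneg.2 (inv_le_one_of_one_le₀ hP)
  · exact ENNReal.sum_le_tsum s
  · exact ENNReal.sum_le_tsum s

lemma inner_le_Lp_mul_Lq_tsum {ι : Type*} {P Q : ℝ} (hPQ : P.HolderConjugate Q) (f g : ι → ℝ≥0∞) :
    ∑' i, f i * g i ≤ (∑' i, f i ^ P) ^ (1 / P) * (∑' i, g i ^ Q) ^ (1 / Q) := by
  rw [ENNReal.tsum_eq_iSup_sum]
  refine iSup_le fun s => (inner_le_Lp_mul_Lq s f g hPQ).trans ?_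
  have := hPQ.one_div_nonneg
  have := hPQ.symm.one_div_nonneg
  gcongr <;> exact ENNReal.sum_le_tsum s

end ENNReal

section NestNorm

variable {ι : Type*} {p q r : ℝ≥0∞}

lemma nestNorm_mono {F G : ι → ℝ≥0∞} (h : ∀ i, F i ≤ G i) : nestNorm p F ≤ nestNorm p G := by
  unfold nestNorm
  split_ifs
  · exact iSup_mono h
  · have := one_div_nonneg.2 (ENNReal.toReal_nonneg (a := p))
    gcongr with i
    exact h i

lemma le_nestNorm_top (F : ι → ℝ≥0∞) (i : ι) : F i ≤ nestNorm ∞ F := by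
  rw [nestNorm, if_pos rfl]
  exact le_iSup F i

lemma nestNorm_rpow_toReal (hp₀ : p ≠ 0) (hp : p ≠ ∞) (F : ι → ℝ≥0∞) :
    nestNorm p F ^ p.toReal = ∑' i, F i ^ p.toReal := by
  rw [nestNorm, if_neg hp, one_div, ENNReal.rpow_inv_rpow (ENNReal.toReal_ne_zero.2 ⟨hp₀, hp⟩)]

lemma nestNorm_const_mul (hp : p ≠ 0) (c : ℝ≥0∞) (F : ι → ℝ≥0∞) :
    nestNorm p (fun i => c * F i) = c * nestNorm p F := by
  by_cases hp_top : p = ∞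
  · simp only [nestNorm, if_pos hp_top, ENNReal.mul_iSup]
  · have hP : 0 < p.toReal := ENNReal.toReal_pos hp hp_top
    refine ENNReal.rpow_left_injective hP.ne' ?_
    simp only
    rw [ENNReal.mul_rpow_of_nonneg _ _ hP.le,
      nestNorm_rpow_toReal hp hp_top, nestNorm_rpow_toReal hp hp_top, ← ENNReal.tsum_mul_left]
    simp_rw [ENNReal.mul_rpow_of_nonneg _ _ hP.le]

lemma nestNorm_mul_le_top_mul (hq : q ≠ 0) (F G : ι → ℝ≥0∞) :
    nestNorm q (fun i => F i * G i) ≤ nestNorm ∞ F * nestNorm q G := by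
  rw [← nestNorm_const_mul hq]
  exact nestNorm_mono fun i => mul_le_mul_left (le_nestNorm_top F i) _

lemma nestNorm_mul_le (hp : p ≠ 0) (hq : q ≠ 0) (hpqr : p⁻¹ + q⁻¹ = r⁻¹) (F G : ι → ℝ≥0∞) :
    nestNorm r (fun i => F i * G i) ≤ nestNorm p F * nestNorm q G := by
  by_cases hp_top : p = ∞
  · obtain rfl : q = r := by simpa [hp_top] using hpqr
    exact hp_top ▸ nestNorm_mul_le_top_mul hq F G
  by_cases hq_top : q = ∞
  · obtain rfl : p = r := by simpa [hq_top] using hpqr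
    simp_rw [mul_comm (F _), mul_comm (nestNorm p F)]
    exact hq_top ▸ nestNorm_mul_le_top_mul hp G F
  have hP : 0 < p.toReal := ENNReal.toReal_pos hp hp_top
  have hQ : 0 < q.toReal := ENNReal.toReal_pos hq hq_top
  have hPQR : Real.HolderTriple p.toReal q.toReal r.toReal :=
    (ENNReal.HolderTriple.toReal_iff r hP hQ).2 ⟨hpqr⟩
  have hR := hPQR.pos'
  have hr₀ : r ≠ 0 := fun h => by simp [h] at hR
  have hr_top : r ≠ ∞ := fun h => by simp [h] at hR
  set P := p.toReal
  set Q := q.toReal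
  set R := r.toReal
  rw [← ENNReal.rpow_le_rpow_iff hR, nestNorm_rpow_toReal hr₀ hr_top,
    ENNReal.mul_rpow_of_nonneg _ _ hR.le]
  calc ∑' i, (F i * G i) ^ R = ∑' i, F i ^ R * G i ^ R := by
        simp_rw [ENNReal.mul_rpow_of_nonneg _ _ hR.le]
    _ ≤ (∑' i, (F i ^ R) ^ (P / R)) ^ (1 / (P / R)) * (∑' i, (G i ^ R) ^ (Q / R)) ^ (1 / (Q / R)) :=
        ENNReal.inner_le_Lp_mul_Lq_tsum hPQR.holderConjugate_div_div _ _
    _ = (∑' i, F i ^ P) ^ (R / P) * (∑' i, G i ^ Q) ^ (R / Q) := by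
        simp_rw [← ENNReal.rpow_mul, mul_div_cancel₀ _ hR.ne', one_div_div]
    _ = nestNorm p F ^ R * nestNorm q G ^ R := by
        rw [← nestNorm_rpow_toReal hp hp_top, ← nestNorm_rpow_toReal hq hq_top,
          ← ENNReal.rpow_mul, ← ENNReal.rpow_mul, mul_div_cancel₀ _ hP.ne',
          mul_div_cancel₀ _ hQ.ne']

variable [AddCommGroup ι]

lemma tsum_sub_left (K : ι → ℝ≥0∞) (j : ι) : ∑' k, K (j - k) = ∑' m, K m :=
  (Equiv.subLeft j).tsum_eq K

lemma tsum_sub_right (K : ι → ℝ≥0∞) (k : ι) : ∑' j, K (j - k) = ∑' m, K m :=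
  (Equiv.subRight k).tsum_eq K

lemma tsum_conv_rpow_le {P : ℝ} (hP : 1 ≤ P) (K F : ι → ℝ≥0∞) :
    ∑' j, (∑' k, K (j - k) * F k) ^ P ≤ (∑' m, K m) ^ P * ∑' k, F k ^ P := by
  set S := ∑' m, K m
  have hP₀ : 0 < P := zero_lt_one.trans_le hP
  have hpoint (j : ι) :
      (∑' k, K (j - k) * F k) ^ P ≤ S ^ (P - 1) * ∑' k, K (j - k) * F k ^ P := by
    calc (∑' k, K (j - k) * F k) ^ P
        ≤ ((∑' k, K (j - k)) ^ (1 - P⁻¹) * (∑' k, K (j - k) * F k ^ P) ^ P⁻¹) ^ P := by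
          gcongr
          exact ENNReal.inner_le_weight_mul_Lp_tsum hP _ F
      _ = S ^ (P - 1) * ∑' k, K (j - k) * F k ^ P := by
          rw [tsum_sub_left, ENNReal.mul_rpow_of_nonneg _ _ hP₀.le, ← ENNReal.rpow_mul,
            ← ENNReal.rpow_mul, sub_mul, one_mul, inv_mul_cancel₀ hP₀.ne', ENNReal.rpow_one]
  calc ∑' j, (∑' k, K (j - k) * F k) ^ P ≤ ∑' j, S ^ (P - 1) * ∑' k, K (j - k) * F k ^ P :=
        ENNReal.tsum_le_tsum hpoint
    _ = S ^ (P - 1) * ∑' k, (∑' j, K (j - k)) * F k ^ P := by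
        rw [ENNReal.tsum_mul_left, ENNReal.tsum_comm]
        simp_rw [ENNReal.tsum_mul_right]
    _ = S ^ (P - 1) * S * ∑' k, F k ^ P := by
        simp_rw [tsum_sub_right, ENNReal.tsum_mul_left, mul_assoc]
        rfl
    _ = S ^ P * ∑' k, F k ^ P := by
        congr 1
        conv_rhs => rw [← sub_add_cancel P 1,
          ENNReal.rpow_add_of_nonneg _ _ (by linarith) zero_le_one, ENNReal.rpow_one]

lemma nestNorm_conv_le (hp : 1 ≤ p) (K F : ι → ℝ≥0∞) :
    nestNorm p (fun j => ∑' k, K (j - k) * F k) ≤ (∑' m, K m) * nestNorm p F := by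
  by_cases hp_top : p = ∞
  · subst hp_top
    rw [nestNorm, if_pos rfl]
    refine iSup_le fun j => ?_
    calc ∑' k, K (j - k) * F k ≤ ∑' k, K (j - k) * nestNorm ∞ F :=
          ENNReal.tsum_le_tsum fun k => mul_le_mul_right (le_nestNorm_top F k) _
      _ = (∑' m, K m) * nestNorm ∞ F := by rw [ENNReal.tsum_mul_right, tsum_sub_left]
  have hp₀ : p ≠ 0 := (zero_lt_one.trans_le hp).ne'
  have hP : 1 ≤ p.toReal := by simpa using ENNReal.toReal_mono hp_top hp
  rw [← ENNReal.rpow_le_rpow_iff (zero_lt_one.trans_le hP), ENNReal.mul_rpow_of_nonneg _ _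
    (zero_le_one.trans hP), nestNorm_rpow_toReal hp₀ hp_top, nestNorm_rpow_toReal hp₀ hp_top]
  exact tsum_conv_rpow_le hP K F

lemma nestNorm_mul_tsum_le (hp : 1 ≤ p) (hq : 1 ≤ q) (hpqr : p⁻¹ + q⁻¹ = r⁻¹)
    {K : ι → ℝ≥0∞} {W : ι → ι → ℝ≥0∞} {c : ℝ≥0∞} (hW : ∀ j k, W j k ≤ c * K (j - k))
    (F G : ι → ℝ≥0∞) :
    nestNorm r (fun j => (∑' k, W j k * F k) * ∑' l, K (j - l) * G l) ≤
      c * ((∑' m, K m) * nestNorm p F) * ((∑' m, K m) * nestNorm q G) := by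
  have hp₀ : p ≠ 0 := (zero_lt_one.trans_le hp).ne'
  have hq₀ : q ≠ 0 := (zero_lt_one.trans_le hq).ne'
  have hr₀ : r ≠ 0 := by
    rw [← ENNReal.inv_ne_top, ← hpqr]
    exact ENNReal.add_ne_top.2 ⟨ENNReal.inv_ne_top.2 hp₀, ENNReal.inv_ne_top.2 hq₀⟩
  calc nestNorm r (fun j => (∑' k, W j k * F k) * ∑' l, K (j - l) * G l)
      ≤ nestNorm r (fun j => c * ((∑' k, K (j - k) * F k) * ∑' l, K (j - l) * G l)) := by
        refine nestNorm_mono fun j => ?_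
        refine (mul_le_mul_left ?_ _).trans_eq (mul_assoc _ _ _)
        rw [← ENNReal.tsum_mul_left]
        exact ENNReal.tsum_le_tsum fun k => (mul_le_mul_left (hW j k) _).trans_eq (mul_assoc _ _ _)
    _ = c * nestNorm r (fun j => (∑' k, K (j - k) * F k) * ∑' l, K (j - l) * G l) :=
        nestNorm_const_mul hr₀ _ _
    _ ≤ c * (nestNorm p (fun j => ∑' k, K (j - k) * F k) *
          nestNorm q (fun j => ∑' l, K (j - l) * G l)) := by
        gcongr
        exact nestNorm_mul_le hp₀ hq₀ hpqr _ _
    _ ≤ c * ((∑' m, K m) * nestNorm p F) * ((∑' m, K m) * nestNorm q G) := by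
        rw [mul_assoc]
        gcongr
        · exact nestNorm_conv_le hp K F
        · exact nestNorm_conv_le hq K G

end NestNorm

lemma lp.enorm_eq_nestNorm {ι E : Type*} [NormedAddCommGroup E] {r : ℝ≥0∞} [Fact (1 ≤ r)]
    (hr : r ≠ ∞) (h : lp (fun _ : ι => E) r) : ‖h‖ₑ = nestNorm r fun j => ‖h j‖ₑ := by
  have hR : 0 < r.toReal :=
    ENNReal.toReal_pos (zero_lt_one.trans_le (Fact.out : (1 : ℝ≥0∞) ≤ r)).ne' hr
  have hsum : ∑' j, ‖h j‖ₑ ^ r.toReal = ENNReal.ofReal (∑' j, ‖h j‖ ^ r.toReal) := by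
    rw [ENNReal.ofReal_tsum_of_nonneg (fun _ => by positivity) ((lp.memℓp h).summable hR)]
    congr 1 with j
    rw [← ofReal_norm, ENNReal.ofReal_rpow_of_nonneg (norm_nonneg _) hR.le]
  rw [← ofReal_norm, lp.norm_eq_tsum_rpow hR]
  simp only [nestNorm, if_neg hr]
  rw [hsum, ENNReal.ofReal_rpow_of_nonneg (by positivity) (by positivity)]

lemma lp.sub_sum_single_apply {ι E : Type*} [DecidableEq ι] [NormedAddCommGroup E] {r : ℝ≥0∞}
    (h : lp (fun _ : ι => E) r) (T : Finset ι) (j : ι) :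
    (h - ∑ i ∈ T, lp.single r i (h i)) j = if j ∈ T then 0 else h j := by
  simp only [lp.coeFn_sub, lp.coeFn_sum, lp.coeFn_single, Pi.sub_apply, Finset.sum_apply,
    Finset.sum_pi_single]
  split_ifs <;> simp

lemma lp.totallyBounded_of_truncation {ι E : Type*} [DecidableEq ι] [NormedAddCommGroup E]
    [ProperSpace E] {r : ℝ≥0∞} [Fact (1 ≤ r)] {S : Set (lp (fun _ : ι => E) r)} {C : ℝ}
    (hS : ∀ h ∈ S, ‖h‖ ≤ C)
    (htail : ∀ ε > 0, ∃ T : Finset ι, ∀ h ∈ S, ‖h - ∑ j ∈ T, lp.single r j (h j)‖ ≤ ε) :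
    TotallyBounded S := by
  have hr₀ : r ≠ 0 := (zero_lt_one.trans_le (Fact.out : (1 : ℝ≥0∞) ≤ r)).ne'
  refine Metric.totallyBounded_iff.2 fun ε hε => ?_
  obtain ⟨T, hT⟩ := htail (ε / 2) (half_pos hε)
  let φ : (T → E) → lp (fun _ : ι => E) r := fun v => ∑ j : T, lp.single r j (v j)
  have hφ : Continuous φ := continuous_finsetSum _ fun j _ =>
    (lp.isometry_single (E := fun _ : ι => E) (j : ι)).continuous.comp (continuous_apply j)
  have htrunc (h) (hh : h ∈ S) : ∑ j ∈ T, lp.single r j (h j) ∈ φ '' Metric.closedBall 0 C := by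
    refine ⟨fun j => h j, mem_closedBall_zero_iff.2 ?_,
      Finset.sum_coe_sort T fun j => lp.single r j (h j)⟩
    exact (pi_norm_le_iff_of_nonneg ((norm_nonneg h).trans (hS h hh))).2 fun j =>
      (lp.norm_apply_le_norm hr₀ h j).trans (hS h hh)
  obtain ⟨t, ht, hcover⟩ := Metric.totallyBounded_iff.1
    ((isCompact_closedBall (0 : T → E) C).image hφ).totallyBounded (ε / 2) (half_pos hε)
  refine ⟨t, ht, fun h hh => ?_⟩
  obtain ⟨y, hy, hdist⟩ := Set.mem_iUnion₂.1 (hcover (htrunc h hh))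
  refine Set.mem_iUnion₂.2 ⟨y, hy, ?_⟩
  calc dist h y ≤ dist h (∑ j ∈ T, lp.single r j (h j)) + dist (∑ j ∈ T, lp.single r j (h j)) y :=
        dist_triangle _ _ _
    _ < ε / 2 + ε / 2 := by
        rw [dist_eq_norm]
        exact add_lt_add_of_le_of_lt (hT h hh) hdist
    _ = ε := add_halves ε

section Dominated

variable {ι E : Type*} [AddCommGroup ι] [NormedAddCommGroup E] {p q r : ℝ≥0∞} [Fact (1 ≤ r)]
  {K : ι → ℝ≥0∞} {W : ι → ι → ℝ≥0∞}

lemma enorm_sub_truncation_le [DecidableEq ι] (hp : 1 ≤ p) (hq : 1 ≤ q) (hr : r ≠ ∞)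
    (hpqr : p⁻¹ + q⁻¹ = r⁻¹) {ε : ℝ≥0∞} {T : Finset ι} (hW : ∀ j ∉ T, ∀ k, W j k ≤ ε * K (j - k))
    {h : lp (fun _ : ι => E) r} {F G : ι → ℝ≥0∞} (hF : nestNorm p F ≤ 1) (hG : nestNorm q G ≤ 1)
    (hh : ∀ j, ‖h j‖ₑ ≤ (∑' k, W j k * F k) * ∑' l, K (j - l) * G l) :
    ‖h - ∑ j ∈ T, lp.single r j (h j)‖ₑ ≤ ε * (∑' m, K m) * ∑' m, K m := by
  set S := ∑' m, K m
  let W' : ι → ι → ℝ≥0∞ := fun j k => if j ∈ T then 0 else W j k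
  have hW' (j k : ι) : W' j k ≤ ε * K (j - k) := by
    by_cases hj : j ∈ T
    · simp [W', hj]
    · simpa [W', hj] using hW j hj k
  rw [lp.enorm_eq_nestNorm hr]
  calc nestNorm r (fun j => ‖(h - ∑ j ∈ T, lp.single r j (h j)) j‖ₑ)
      ≤ nestNorm r (fun j => (∑' k, W' j k * F k) * ∑' l, K (j - l) * G l) := by
        refine nestNorm_mono fun j => ?_
        rw [lp.sub_sum_single_apply]
        by_cases hj : j ∈ T
        · simp [hj]
        · simpa [W', hj] using hh j
    _ ≤ ε * (S * nestNorm p F) * (S * nestNorm q G) := nestNorm_mul_tsum_le hp hq hpqr hW' F G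
    _ ≤ ε * (S * 1) * (S * 1) := by gcongr
    _ = ε * S * S := by simp only [mul_one]

theorem totallyBounded_of_dominated [ProperSpace E] (hp : 1 ≤ p) (hq : 1 ≤ q) (hr : r ≠ ∞)
    (hpqr : p⁻¹ + q⁻¹ = r⁻¹) (hK : ∑' m, K m ≠ ∞) {c : ℝ≥0∞} (hc : c ≠ ∞)
    (hW : ∀ j k, W j k ≤ c * K (j - k))
    (hW_tail : ∀ ε > 0, ∀ᶠ j in cofinite, ∀ k, W j k ≤ ε * K (j - k))
    {S : Set (lp (fun _ : ι => E) r)}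
    (hS : ∀ h ∈ S, ∃ F G : ι → ℝ≥0∞, nestNorm p F ≤ 1 ∧ nestNorm q G ≤ 1 ∧
      ∀ j, ‖h j‖ₑ ≤ (∑' k, W j k * F k) * ∑' l, K (j - l) * G l) :
    TotallyBounded S := by
  classical
  refine lp.totallyBounded_of_truncation (C := (c * (∑' m, K m) * ∑' m, K m).toReal)
    (fun h hh => ?_) fun η hη => ?_
  · obtain ⟨F, G, hF, hG, hh⟩ := hS h hh
    have := enorm_sub_truncation_le hp hq hr hpqr (T := ∅) (fun j _ k => hW j k) hF hG hh
    rw [Finset.sum_empty, sub_zero, ← ofReal_norm] at this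
    exact (ENNReal.ofReal_le_iff_le_toReal (by finiteness)).1 this
  · obtain ⟨ε, hε, hεη⟩ := ENNReal.exists_pos_mul_lt (ENNReal.mul_ne_top hK hK)
      (ENNReal.ofReal_pos.2 hη).ne'
    have hfin := eventually_cofinite.1 (hW_tail ε hε)
    refine ⟨hfin.toFinset, fun h hh => ?_⟩
    obtain ⟨F, G, hF, hG, hh⟩ := hS h hh
    have := enorm_sub_truncation_le hp hq hr hpqr (T := hfin.toFinset) (ε := ε)
      (fun j hj => by simpa using hj) hF hG hh
    rw [← ofReal_norm, mul_assoc] at this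
    exact (ENNReal.ofReal_le_ofReal_iff hη.le).1 (this.trans hεη.le)

end Dominated

section Commutator

variable {d : ℕ} {Θ : Zd d → Zd d → Zd d → ℂ}

lemma lpNorm_eq_nestNorm_enorm (p : ℝ≥0∞) (f : Zd d → ℂ) :
    lpNorm p f = nestNorm p fun k => ‖f k‖ₑ := by
  simp only [lpNorm, ofReal_norm]

lemma enorm_tbil_le (f g : Zd d → ℂ) (j : Zd d) :
    ‖Tbil Θ f g j‖ₑ ≤ ∑' k, ∑' l, ‖Θ j k l‖ₑ * ‖f k‖ₑ * ‖g l‖ₑ := by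
  refine enorm_tsum_le_tsum_enorm.trans (ENNReal.tsum_le_tsum fun k => ?_)
  refine enorm_tsum_le_tsum_enorm.trans_eq (tsum_congr fun l => ?_)
  rw [enorm_mul, enorm_mul]

lemma tsum_tsum_le_of_le_mul {α β : Type*} {T : α → β → ℝ≥0∞} {u : α → ℝ≥0∞} {v : β → ℝ≥0∞}
    {A : ℝ≥0∞} (hT : ∀ k l, T k l ≤ A * u k * v l) (F : α → ℝ≥0∞) (G : β → ℝ≥0∞) :
    ∑' k, ∑' l, T k l * F k * G l ≤ A * ((∑' k, u k * F k) * ∑' l, v l * G l) := by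
  calc ∑' k, ∑' l, T k l * F k * G l ≤ ∑' k, ∑' l, A * (u k * F k) * (v l * G l) :=
        ENNReal.tsum_le_tsum fun k => ENNReal.tsum_le_tsum fun l =>
          (mul_le_mul_left (mul_le_mul_left (hT k l) _) _).trans_eq (by ring)
    _ = A * ((∑' k, u k * F k) * ∑' l, v l * G l) := by
        rw [← ENNReal.tsum_mul_right, ← ENNReal.tsum_mul_left]
        simp_rw [← ENNReal.tsum_mul_left, mul_assoc]

variable {A : ℝ≥0∞} {K L : Zd d → ℝ≥0∞}

lemma enorm_comm1_le (hΘ : ∀ j k l, ‖Θ j k l‖ₑ ≤ A * K (j - k) * L (j - l)) (b f g : Zd d → ℂ)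
    (j : Zd d) :
    ‖comm1 Θ b f g j‖ₑ ≤
      (∑' k, (A * ‖b k‖ₑ + A * ‖b j‖ₑ) * K (j - k) * ‖f k‖ₑ) * ∑' l, L (j - l) * ‖g l‖ₑ := by
  calc ‖comm1 Θ b f g j‖ₑ
      ≤ ‖Tbil Θ (fun k => b k * f k) g j‖ₑ + ‖b j‖ₑ * ‖Tbil Θ f g j‖ₑ :=
        enorm_sub_le.trans_eq (by rw [enorm_mul])
    _ ≤ A * ((∑' k, K (j - k) * ‖b k * f k‖ₑ) * ∑' l, L (j - l) * ‖g l‖ₑ) +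
          ‖b j‖ₑ * (A * ((∑' k, K (j - k) * ‖f k‖ₑ) * ∑' l, L (j - l) * ‖g l‖ₑ)) := by
        gcongr
        · exact (enorm_tbil_le _ _ j).trans (tsum_tsum_le_of_le_mul (hΘ j) _ _)
        · exact (enorm_tbil_le _ _ j).trans (tsum_tsum_le_of_le_mul (hΘ j) _ _)
    _ = (A * ∑' k, K (j - k) * ‖b k * f k‖ₑ + A * ‖b j‖ₑ * ∑' k, K (j - k) * ‖f k‖ₑ) *
          ∑' l, L (j - l) * ‖g l‖ₑ := by ring
    _ = (∑' k, (A * ‖b k‖ₑ + A * ‖b j‖ₑ) * K (j - k) * ‖f k‖ₑ) * ∑' l, L (j - l) * ‖g l‖ₑ := by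
        congr 1
        rw [← ENNReal.tsum_mul_left, ← ENNReal.tsum_mul_left, ← ENNReal.tsum_add]
        exact tsum_congr fun k => by rw [enorm_mul]; ring

lemma enorm_comm2_le (hΘ : ∀ j k l, ‖Θ j k l‖ₑ ≤ A * K (j - k) * L (j - l)) (b f g : Zd d → ℂ)
    (j : Zd d) :
    ‖comm2 Θ b f g j‖ₑ ≤
      (∑' k, K (j - k) * ‖f k‖ₑ) * ∑' l, (A * ‖b l‖ₑ + A * ‖b j‖ₑ) * L (j - l) * ‖g l‖ₑ := by
  calc ‖comm2 Θ b f g j‖ₑ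
      ≤ ‖Tbil Θ f (fun l => b l * g l) j‖ₑ + ‖b j‖ₑ * ‖Tbil Θ f g j‖ₑ :=
        enorm_sub_le.trans_eq (by rw [enorm_mul])
    _ ≤ A * ((∑' k, K (j - k) * ‖f k‖ₑ) * ∑' l, L (j - l) * ‖b l * g l‖ₑ) +
          ‖b j‖ₑ * (A * ((∑' k, K (j - k) * ‖f k‖ₑ) * ∑' l, L (j - l) * ‖g l‖ₑ)) := by
        gcongr
        · exact (enorm_tbil_le _ _ j).trans (tsum_tsum_le_of_le_mul (hΘ j) _ _)
        · exact (enorm_tbil_le _ _ j).trans (tsum_tsum_le_of_le_mul (hΘ j) _ _)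
    _ = (∑' k, K (j - k) * ‖f k‖ₑ) *
          (A * ∑' l, L (j - l) * ‖b l * g l‖ₑ + A * ‖b j‖ₑ * ∑' l, L (j - l) * ‖g l‖ₑ) := by ring
    _ = (∑' k, K (j - k) * ‖f k‖ₑ) * ∑' l, (A * ‖b l‖ₑ + A * ‖b j‖ₑ) * L (j - l) * ‖g l‖ₑ := by
        congr 1
        rw [← ENNReal.tsum_mul_left, ← ENNReal.tsum_mul_left, ← ENNReal.tsum_add]
        exact tsum_congr fun l => by rw [enorm_mul]; ring

end Commutator

lemma exists_enorm_le_of_tendsto_cofinite {ι E : Type*} [SeminormedAddGroup E] {b : ι → E}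
    {a : E} (hb : Tendsto b cofinite (𝓝 a)) : ∃ B ≠ ∞, ∀ k, ‖b k‖ₑ ≤ B := by
  obtain ⟨C, hC⟩ := isBounded_iff_forall_norm_le.1 (Metric.isBounded_range_of_tendsto_cofinite hb)
  refine ⟨ENNReal.ofReal C, ENNReal.ofReal_ne_top, fun k => ?_⟩
  rw [← ofReal_norm]
  exact ENNReal.ofReal_le_ofReal (hC _ ⟨k, rfl⟩)

open scoped Pointwise in
lemma eventually_weight_le {ι : Type*} [AddCommGroup ι] {β L D : ι → ℝ≥0∞} {B : ℝ≥0∞}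
    (hB : B ≠ ∞) (hβB : ∀ k, β k ≤ B) (hβ : Tendsto β cofinite (𝓝 0))
    (hD : Tendsto D cofinite (𝓝 0)) (hD_le : ∀ m, D m ≤ 1) {ε : ℝ≥0∞} (hε : 0 < ε) :
    ∀ᶠ j in cofinite, ∀ k, (β k + β j) * (L (j - k) * D (j - k)) ≤ ε * L (j - k) := by
  have hβ_small := ENNReal.tendsto_nhds_zero.1 hβ (ε / 2) (ENNReal.half_pos hε.ne')
  have hD_small : ∀ᶠ m in cofinite, (B + B) * D m ≤ ε := by
    refine ENNReal.tendsto_nhds_zero.1 ?_ ε hε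
    simpa using ENNReal.Tendsto.const_mul hD (.inr (ENNReal.add_ne_top.2 ⟨hB, hB⟩))
  have hbad := eventually_cofinite.1 hβ_small
  filter_upwards [(hbad.add (eventually_cofinite.1 hD_small)).eventually_cofinite_notMem,
    hβ_small] with j hj hβj k
  -- Either `D (j - k)` is already small, or `j - k` lies in a finite set, and then `k`, like `j`,
  -- avoids the finite set where `β` is not small.
  by_cases hjk : (B + B) * D (j - k) ≤ ε
  · calc (β k + β j) * (L (j - k) * D (j - k)) ≤ (B + B) * (L (j - k) * D (j - k)) := by
          gcongr <;> apply hβB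
      _ = (B + B) * D (j - k) * L (j - k) := by ring
      _ ≤ ε * L (j - k) := by gcongr
  · have hβk : β k ≤ ε / 2 := by
      by_contra hk
      have := Set.add_mem_add (s := {k | ¬β k ≤ ε / 2}) (t := {m | ¬(B + B) * D m ≤ ε}) hk hjk
      rw [add_sub_cancel] at this
      exact hj this
    calc (β k + β j) * (L (j - k) * D (j - k)) ≤ (ε / 2 + ε / 2) * (L (j - k) * 1) := by
          gcongr
          exact hD_le _
      _ = ε * L (j - k) := by rw [ENNReal.add_halves, mul_one]

section CommutatorWeight

variable {d : ℕ} {E : Type*} [NormedAddGroup E] {b : Zd d → E} {A : ℝ≥0∞} {N N' : ℝ}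

lemma exists_commutatorWeight_le (hb : Tendsto b cofinite (𝓝 0)) (hA : A ≠ ∞) (hN' : N' ≤ N) :
    ∃ c ≠ ∞, ∀ j k, (A * ‖b k‖ₑ + A * ‖b j‖ₑ) * decayKernel d N (j - k) ≤
      c * decayKernel d N' (j - k) := by
  obtain ⟨B, hB, hbB⟩ := exists_enorm_le_of_tendsto_cofinite hb
  refine ⟨A * B + A * B, by finiteness, fun j k => ?_⟩
  gcongr
  · exact hbB k
  · exact hbB j
  · exact decayKernel_anti hN' _

lemma eventually_commutatorWeight_le (hb : Tendsto b cofinite (𝓝 0)) (hA : A ≠ ∞) (hN' : N' < N)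
    {ε : ℝ≥0∞} (hε : 0 < ε) :
    ∀ᶠ j in cofinite, ∀ k, (A * ‖b k‖ₑ + A * ‖b j‖ₑ) * decayKernel d N (j - k) ≤
      ε * decayKernel d N' (j - k) := by
  obtain ⟨B, hB, hbB⟩ := exists_enorm_le_of_tendsto_cofinite hb
  have hβ : Tendsto (fun k => A * ‖b k‖ₑ) cofinite (𝓝 0) := by
    simpa using ENNReal.Tendsto.const_mul hb.enorm (.inr hA)
  have hsplit (m : Zd d) : decayKernel d N m = decayKernel d N' m * decayKernel d (N - N') m := by
    rw [← decayKernel_add, add_sub_cancel]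
  simp_rw [hsplit]
  exact eventually_weight_le (by finiteness) (fun k => mul_le_mul_right (hbB k) A) hβ
    (tendsto_decayKernel_cofinite (sub_pos.2 hN')) (decayKernel_le_one (sub_pos.2 hN').le) hε

end CommutatorWeight

theorem stmt_8_general {d : ℕ} (N : ℝ) (hN : (d : ℝ) < N)
    (Θ : Zd d → Zd d → Zd d → ℂ)
    (hΘ : (⨆ j : Zd d, ⨆ k : Zd d, ⨆ l : Zd d,
      ENNReal.ofReal (‖Θ j k l‖ * jb (znorm (j - k) + znorm (j - l)) ^ (2 * N))) ≠ ∞)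
    (b : Zd d → ℂ)
    (hb : ∀ ε : ℝ, 0 < ε → ∃ R : ℝ, ∀ k : Zd d, R < znorm k → ‖b k‖ < ε)
    (p q r : ℝ≥0∞) (hp : 1 ≤ p) (hq : 1 ≤ q) (hr' : r ≠ ∞)
    [Fact (1 ≤ r)] (hpqr : p⁻¹ + q⁻¹ = r⁻¹) :
    TotallyBounded {h : lp (fun _ : Zd d => ℂ) r | ∃ f g : Zd d → ℂ,
        lpNorm p f ≤ 1 ∧ lpNorm q g ≤ 1 ∧ ∀ j : Zd d, h j = comm1 Θ b f g j} ∧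
    TotallyBounded {h : lp (fun _ : Zd d => ℂ) r | ∃ f g : Zd d → ℂ,
        lpNorm p f ≤ 1 ∧ lpNorm q g ≤ 1 ∧ ∀ j : Zd d, h j = comm2 Θ b f g j} := by
  set A := ⨆ j : Zd d, ⨆ k : Zd d, ⨆ l : Zd d,
    ENNReal.ofReal (‖Θ j k l‖ * jb (znorm (j - k) + znorm (j - l)) ^ (2 * N))
  have hA (j k l : Zd d) :
      ENNReal.ofReal (‖Θ j k l‖ * jb (znorm (j - k) + znorm (j - l)) ^ (2 * N)) ≤ A :=
    le_iSup_of_le j (le_iSup_of_le k (le_iSup_of_le l le_rfl))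
  obtain ⟨N', hdN', hN'⟩ := exists_between hN
  have hN₀ : 0 ≤ N := (Nat.cast_nonneg d).trans hN.le
  have hΘ₁ (j k l : Zd d) := enorm_le_mul_decayKernel hN₀ le_rfl hN'.le (hA j k l)
  have hΘ₂ (j k l : Zd d) := enorm_le_mul_decayKernel hN₀ hN'.le le_rfl (hA j k l)
  have hb₀ := tendsto_cofinite_zero_of_forall_znorm hb
  obtain ⟨c, hc, hW⟩ := exists_commutatorWeight_le hb₀ hΘ hN'.le
  have hW_tail (ε : ℝ≥0∞) (hε : 0 < ε) := eventually_commutatorWeight_le hb₀ hΘ hN' hε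
  have hK := tsum_decayKernel_ne_top hdN'
  refine ⟨totallyBounded_of_dominated hp hq hr' hpqr hK hc hW hW_tail ?_,
    totallyBounded_of_dominated hq hp hr' (by rwa [add_comm]) hK hc hW hW_tail ?_⟩
  · rintro h ⟨f, g, hf, hg, hh⟩
    refine ⟨_, _, by rwa [← lpNorm_eq_nestNorm_enorm], by rwa [← lpNorm_eq_nestNorm_enorm],
      fun j => ?_⟩
    rw [hh j]
    exact enorm_comm1_le hΘ₁ b f g j
  · rintro h ⟨f, g, hf, hg, hh⟩
    refine ⟨_, _, by rwa [← lpNorm_eq_nestNorm_enorm], by rwa [← lpNorm_eq_nestNorm_enorm],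
      fun j => ?_⟩
    rw [hh j, mul_comm]
    exact enorm_comm2_le hΘ₂ b f g j

/-- Theorem 3: if `sup |Θ(j,k,ℓ)| ⟨|j−k|+|j−ℓ|⟩^{2N} < ∞` for some `N > d` and
`b ∈ c₀(ℤ^d)`, then the commutators `[𝒯_Θ, b]ᵢ`, `i = 1, 2`, are compact
`ℓ^p × ℓ^q → ℓ^r`: the image of the product of unit balls is totally bounded in `ℓ^r`. -/
theorem stmt_8 {d : ℕ} (hd : 1 ≤ d) (N : ℝ) (hN : (d : ℝ) < N)
    (Θ : Zd d → Zd d → Zd d → ℂ)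
    (hΘ : (⨆ j : Zd d, ⨆ k : Zd d, ⨆ l : Zd d,
      ENNReal.ofReal (‖Θ j k l‖ * jb (znorm (j - k) + znorm (j - l)) ^ (2 * N))) ≠ ∞)
    (b : Zd d → ℂ)
    (hb : ∀ ε : ℝ, 0 < ε → ∃ R : ℝ, ∀ k : Zd d, R < znorm k → ‖b k‖ < ε)
    (p q r : ℝ≥0∞) (hp : 1 ≤ p) (hq : 1 ≤ q) (hr : 1 ≤ r) (hr' : r ≠ ∞)
    [Fact (1 ≤ r)] (hpqr : p⁻¹ + q⁻¹ = r⁻¹) :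
    TotallyBounded {h : lp (fun _ : Zd d => ℂ) r | ∃ f g : Zd d → ℂ,
        lpNorm p f ≤ 1 ∧ lpNorm q g ≤ 1 ∧ ∀ j : Zd d, h j = comm1 Θ b f g j} ∧
    TotallyBounded {h : lp (fun _ : Zd d => ℂ) r | ∃ f g : Zd d → ℂ,
        lpNorm p f ≤ 1 ∧ lpNorm q g ≤ 1 ∧ ∀ j : Zd d, h j = comm2 Θ b f g j} :=
  stmt_8_general N hN Θ hΘ b hb p q r hp hq hr' hpqr

end
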